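/- arXiv:1909.05903 — 5 statements merged into one kernel-verified Lean document; each statement's English description precedes it below -/
import Mathlib

section
/- For all u, v ∈ S_o with u ≼ v, one has I_o(u) ≥ I_o(v) and H_o(u) ≼ H_o(v); that is, the mapping H_o : S_o → S_o is increasing with respect to the partial order ≼. -/
open scoped BigOperators

/-- The space `S_o`: the empty tuple together with all nondecreasing tuples of length at most `K`
with entries in `[0,1]`, represented as sorted lists of reals. -/
def So (K : ℕ) : Type :=
  {l : List ℝ // l.length ≤ K ∧ l.Pairwise (· ≤ ·) ∧ ∀ x ∈ l, x ∈ Set.Icc (0 : ℝ) 1}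

/-- The partial order `≼` (on the underlying lists): `u ≼ v` iff `dim u ≥ dim v` and
`u_i ≤ v_i` for every `i < dim v`. -/
def preceqL (a b : List ℝ) : Prop :=
  b.length ≤ a.length ∧ ∀ i < b.length, a.getD i 0 ≤ b.getD i 0

/-- `I_o(u) = max { n ∈ {0,…,dim u} : Σ_{i=1}^n u_i ≤ α n }` (the empty sum is `0`). -/
noncomputable def Io (α : ℝ) (l : List ℝ) : ℕ :=
  ((Finset.range (l.length + 1)).filter
    fun n => (∑ i ∈ Finset.range n, l.getD i 0) ≤ α * n).max' ⟨0, by simp⟩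

/-- `H_o(u) = (u_1,…,u_{I_o(u)})`, the empty tuple if `I_o(u) = 0`. -/
noncomputable def Ho (α : ℝ) (l : List ℝ) : List ℝ :=
  l.take (Io α l)

/-! Entrywise domination on the first `dim v` coordinates bounds every partial sum
`Σ_{i<n} u_i ≤ Σ_{i<n} v_i` for `n ≤ dim v`; in particular the index `I_o(v)` is admissible
for `u`, so `I_o(v) ≤ I_o(u)` by maximality. Both truncations then compare entrywise. -/

lemma le_Io_of_sum_le {α : ℝ} {l : List ℝ} {n : ℕ} (hn : n ≤ l.length)
    (hsum : ∑ i ∈ Finset.range n, l.getD i 0 ≤ α * n) : n ≤ Io α l :=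
  Finset.le_max' _ n (Finset.mem_filter.mpr ⟨Finset.mem_range.mpr (Nat.lt_succ_of_le hn), hsum⟩)

lemma Io_le_length_and_sum_le (α : ℝ) (l : List ℝ) :
    Io α l ≤ l.length ∧ ∑ i ∈ Finset.range (Io α l), l.getD i 0 ≤ α * Io α l := by
  have h : Io α l ∈ (Finset.range (l.length + 1)).filter
      fun n => (∑ i ∈ Finset.range n, l.getD i 0) ≤ α * n := Finset.max'_mem _ _
  rw [Finset.mem_filter, Finset.mem_range, Nat.lt_succ_iff] at h
  exact h

lemma List.getD_take_of_lt {β : Type*} {l : List β} {i n : ℕ} (h : i < n) (d : β) :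
    (l.take n).getD i d = l.getD i d := by
  simp only [List.getD_eq_getElem?_getD, List.getElem?_take_of_lt h]

namespace preceqL

variable {a b : List ℝ}

lemma sum_range_le (h : preceqL a b) {n : ℕ} (hn : n ≤ b.length) :
    ∑ i ∈ Finset.range n, a.getD i 0 ≤ ∑ i ∈ Finset.range n, b.getD i 0 :=
  Finset.sum_le_sum fun i hi => h.2 i ((Finset.mem_range.mp hi).trans_le hn)

lemma Io_le (h : preceqL a b) (α : ℝ) : Io α b ≤ Io α a := by
  obtain ⟨hIb, hsum⟩ := Io_le_length_and_sum_le α b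
  exact le_Io_of_sum_le (hIb.trans h.1) ((h.sum_range_le hIb).trans hsum)

lemma take_take (h : preceqL a b) {m n : ℕ} (hmn : m ≤ n) :
    preceqL (a.take n) (b.take m) := by
  refine ⟨by simp only [List.length_take]; have := h.1; omega, fun i hi => ?_⟩
  rw [List.length_take, lt_min_iff] at hi
  rw [List.getD_take_of_lt (hi.1.trans_le hmn), List.getD_take_of_lt hi.1]
  exact h.2 i hi.2

end preceqL

theorem stmt_3_general (K : ℕ) (α : ℝ)
    (u v : So K) (huv : preceqL u.1 v.1) :
    Io α v.1 ≤ Io α u.1 ∧ preceqL (Ho α u.1) (Ho α v.1) :=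
  ⟨huv.Io_le α, huv.take_take (huv.Io_le α)⟩

/-- For all `u ≼ v` in `S_o`, one has `I_o(u) ≥ I_o(v)` and `H_o(u) ≼ H_o(v)`;
i.e. `H_o` is increasing with respect to `≼`. -/
theorem stmt_3 (K : ℕ) (hK : 1 ≤ K) (α : ℝ) (hα : α ∈ Set.Ioc (0 : ℝ) 1)
    (u v : So K) (huv : preceqL u.1 v.1) :
    Io α v.1 ≤ Io α u.1 ∧ preceqL (Ho α u.1) (Ho α v.1) :=
  stmt_3_general K α u v huv
end

section
/- Let u = (u_1,…,u_m) ∈ [0,1]^m with m ≥ 1. Then: (i) Σ_{i=1}^{I_o([u])} [u]_i ≤ α · I_o([u]); and (ii) for every subset S ⊆ {1,…,m} with Σ_{i∈S} u_i ≤ α|S|, one has |S| ≤ I_o([u]). In other words, among all subsets S of {1,…,m} whose coordinate sum satisfies Σ_{i∈S} u_i ≤ α|S|, the set of indices of the I_o([u]) smallest coordinates satisfies the constraint and has maximal cardinality. -/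
open scoped BigOperators

/-- `[·]`: the nondecreasing rearrangement (order statistic) of a finite tuple. -/
noncomputable def sortR (l : List ℝ) : List ℝ :=
  l.insertionSort (· ≤ ·)

/-!
Sorting `u` by a permutation `σ` turns `S` into a set `σ⁻¹ S` of the same size and sum. The
`k`-th smallest index of a `#S`-element subset of `Fin m` is at least `k`, so the `#S` smallest
coordinates of `u` have sum at most `Σ_{i∈S} u_i ≤ α |S|`; hence `|S|` is a candidate in the
maximum defining `I_o([u])`.
-/

open Finset

theorem Fin.val_le_of_strictMono {n m : ℕ} {f : Fin n → Fin m} (hf : StrictMono f) (i : Fin n) :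
    (i : ℕ) ≤ f i := by
  obtain ⟨k, hk⟩ := i
  induction k with
  | zero => exact Nat.zero_le _
  | succ k ih =>
    exact (ih (by omega)).trans_lt (Fin.lt_def.mp (hf (Fin.mk_lt_mk.mpr k.lt_succ_self)))

theorem Monotone.sum_range_getD_ofFn_le_sum {M : Type*} [AddCommMonoid M] [PartialOrder M]
    [IsOrderedAddMonoid M] {m : ℕ} {v : Fin m → M} (hv : Monotone v) (T : Finset (Fin m)) :
    ∑ i ∈ range #T, (List.ofFn v).getD i 0 ≤ ∑ j ∈ T, v j := by
  have hTm : #T ≤ m := by simpa using T.card_le_univ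
  set f := T.orderEmbOfFin rfl
  calc ∑ i ∈ range #T, (List.ofFn v).getD i 0 = ∑ i : Fin #T, v (Fin.castLE hTm i) := by
        rw [← Fin.sum_univ_eq_sum_range]
        refine sum_congr rfl fun i _ => ?_
        simp [i.2.trans_le hTm, Fin.castLE]
    _ ≤ ∑ i : Fin #T, v (f i) :=
        sum_le_sum fun i _ => hv (Fin.le_def.mpr (Fin.val_le_of_strictMono f.strictMono i))
    _ = ∑ j ∈ T, v j :=
        (sum_map _ _ _).symm.trans (congrArg (∑ j ∈ ·, v j) (T.map_orderEmbOfFin_univ rfl))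

theorem sum_range_getD_Io_le (α : ℝ) (l : List ℝ) :
    ∑ i ∈ range (Io α l), l.getD i 0 ≤ α * Io α l := by
  have hmem : Io α l ∈ (range (l.length + 1)).filter
      fun n => ∑ i ∈ range n, l.getD i 0 ≤ α * n := max'_mem _ _
  exact (mem_filter.mp hmem).2

theorem le_Io {α : ℝ} {l : List ℝ} {n : ℕ} (hn : n ≤ l.length)
    (h : ∑ i ∈ range n, l.getD i 0 ≤ α * n) : n ≤ Io α l :=
  le_max' _ _ (mem_filter.mpr ⟨mem_range.mpr (Nat.lt_succ_of_le hn), h⟩)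

theorem sortR_ofFn {m : ℕ} (u : Fin m → ℝ) :
    sortR (List.ofFn u) = List.ofFn (u ∘ Tuple.sort u) :=
  List.Perm.eq_of_pairwise' (List.pairwise_insertionSort _ _)
    (List.sortedLE_iff_pairwise.mp (List.sortedLE_ofFn_iff.mpr (Tuple.monotone_sort u)))
    ((List.perm_insertionSort _ _).trans ((Tuple.sort u).ofFn_comp_perm u).symm)

theorem stmt_6_general (α : ℝ) (m : ℕ) (u : Fin m → ℝ) :
    (∑ i ∈ Finset.range (Io α (sortR (List.ofFn u))), (sortR (List.ofFn u)).getD i 0)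
        ≤ α * (Io α (sortR (List.ofFn u))) ∧
    ∀ S : Finset (Fin m), (∑ i ∈ S, u i) ≤ α * S.card →
      S.card ≤ Io α (sortR (List.ofFn u)) := by
  refine ⟨sum_range_getD_Io_le α _, fun S hS => le_Io ?_ ?_⟩
  · simpa [sortR_ofFn] using S.card_le_univ
  · set σ := Tuple.sort u
    have hsorted := (Tuple.monotone_sort u).sum_range_getD_ofFn_le_sum (S.map σ.symm.toEmbedding)
    rw [card_map, sum_map] at hsorted
    rw [sortR_ofFn]
    calc _ ≤ ∑ i ∈ S, (u ∘ σ) (σ.symm i) := hsorted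
      _ = ∑ i ∈ S, u i := by simp
      _ ≤ α * #S := hS

/-- Let `u ∈ [0,1]^m` with `m ≥ 1`.  Then (i) the sum of the `I_o([u])` smallest coordinates
of `u` is at most `α · I_o([u])`, and (ii) every subset `S ⊆ {1,…,m}` with
`Σ_{i∈S} u_i ≤ α|S|` satisfies `|S| ≤ I_o([u])`: among all subsets satisfying the constraint,
the indices of the `I_o([u])` smallest coordinates satisfy it with maximal cardinality. -/
theorem stmt_6 (α : ℝ) (hα : α ∈ Set.Ioc (0 : ℝ) 1) (m : ℕ) (hm : 1 ≤ m)
    (u : Fin m → ℝ) (hu : ∀ i, u i ∈ Set.Icc (0 : ℝ) 1) :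
    (∑ i ∈ Finset.range (Io α (sortR (List.ofFn u))), (sortR (List.ofFn u)).getD i 0)
        ≤ α * (Io α (sortR (List.ofFn u))) ∧
    ∀ S : Finset (Fin m), (∑ i ∈ S, u i) ≤ α * S.card →
      S.card ≤ Io α (sortR (List.ofFn u)) :=
  stmt_6_general α m u
end

section
/- Let μ be a σ-finite measure on a measurable space, and let p and q be probability densities with respect to μ (nonnegative measurable functions with ∫ p dμ = ∫ q dμ = 1) having the same support, i.e. μ-a.e. p(x) > 0 iff q(x) > 0. Define the likelihood ratio L(x) = q(x)/p(x) on {p > 0} (and L(x) = 0 elsewhere). For δ ∈ [0,1], let μ_δ be the probability measure with density δq + (1−δ)p with respect to μ. Then for every bounded nondecreasing measurable function g : ℝ → ℝ and all 0 ≤ δ₁ ≤ δ₂ ≤ 1, ∫ g(L(x)) dμ_{δ₁}(x) ≤ ∫ g(L(x)) dμ_{δ₂}(x); that is, the law of L under μ_{δ₂} stochastically dominates the law of L under μ_{δ₁}. -/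
open MeasureTheory

/-! Under `μ_δ` the expectation of `g ∘ L` is affine in `δ`, with slope
`∫ q · g(L) dμ - ∫ p · g(L) dμ = ∫ (q - p) (g(L) - g(1)) dμ`, where subtracting `g(1)` is free
because `∫ p = ∫ q`. On `{p > 0}` one has `q - p = p (L - 1)`, so the integrand is
`p (L - 1) (g(L) - g(1)) ≥ 0` by monotonicity of `g`; off the support both densities vanish. -/

theorem Monotone.sub_mul_le_sub_mul_div {g : ℝ → ℝ} (hg : Monotone g) {a b : ℝ} (ha : 0 < a) :
    (b - a) * g 1 ≤ (b - a) * g (b / a) := by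
  have hb : b - a = a * (b / a - 1) := by field_simp
  rw [hb, mul_assoc, mul_assoc]
  refine mul_le_mul_of_nonneg_left ?_ ha.le
  rcases le_total 1 (b / a) with h | h
  · nlinarith [hg h]
  · nlinarith [hg h]

section Mixture

variable {X : Type*} [MeasurableSpace X] {μ : Measure X}

theorem integral_withDensity_ofReal {ρ : X → ℝ} (hρm : Measurable ρ) (hρ0 : ∀ x, 0 ≤ ρ x)
    (f : X → ℝ) :
    ∫ x, f x ∂μ.withDensity (fun x => ENNReal.ofReal (ρ x)) = ∫ x, ρ x * f x ∂μ := by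
  rw [integral_withDensity_eq_integral_toReal_smul hρm.ennreal_ofReal
    (ae_of_all _ fun _ => ENNReal.ofReal_lt_top)]
  simp only [ENNReal.toReal_ofReal (hρ0 _), smul_eq_mul]

theorem integral_withDensity_mixture {p q f : X → ℝ} (hpm : Measurable p) (hqm : Measurable q)
    (hp0 : ∀ x, 0 ≤ p x) (hq0 : ∀ x, 0 ≤ q x) (hpf : Integrable (fun x => p x * f x) μ)
    (hqf : Integrable (fun x => q x * f x) μ) {δ : ℝ} (hδ0 : 0 ≤ δ) (hδ1 : δ ≤ 1) :
    ∫ x, f x ∂μ.withDensity (fun x => ENNReal.ofReal (δ * q x + (1 - δ) * p x))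
      = δ * ∫ x, q x * f x ∂μ + (1 - δ) * ∫ x, p x * f x ∂μ := by
  rw [integral_withDensity_ofReal (ρ := fun x => δ * q x + (1 - δ) * p x) (by fun_prop)
    fun x => add_nonneg (mul_nonneg hδ0 (hq0 x)) (mul_nonneg (sub_nonneg.2 hδ1) (hp0 x))]
  simp only [add_mul, mul_assoc]
  rw [integral_add (hqf.const_mul δ) (hpf.const_mul (1 - δ)), integral_const_mul,
    integral_const_mul]

theorem integral_mul_le_integral_mul_of_sub_mul_le {p q h : X → ℝ} (c : ℝ)
    (hp : Integrable p μ) (hq : Integrable q μ) (hpq : ∫ x, p x ∂μ = ∫ x, q x ∂μ)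
    (hph : Integrable (fun x => p x * h x) μ) (hqh : Integrable (fun x => q x * h x) μ)
    (hle : ∀ᵐ x ∂μ, (q x - p x) * c ≤ (q x - p x) * h x) :
    ∫ x, p x * h x ∂μ ≤ ∫ x, q x * h x ∂μ := by
  have hsplit : ∀ x, (q x - p x) * h x = q x * h x - p x * h x := fun x => by ring
  have hconst : ∫ x, (q x - p x) * c ∂μ = 0 := by
    rw [integral_mul_const, integral_sub hq hp, hpq, sub_self, zero_mul]
  have hdiff : ∫ x, (q x - p x) * h x ∂μ = ∫ x, q x * h x ∂μ - ∫ x, p x * h x ∂μ := by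
    simp only [hsplit]
    exact integral_sub hqh hph
  have hmono : ∫ x, (q x - p x) * c ∂μ ≤ ∫ x, (q x - p x) * h x ∂μ :=
    integral_mono_ae ((hq.sub hp).mul_const c) (by simp only [hsplit]; exact hqh.sub hph) hle
  linarith

end Mixture

theorem stmt_9_general {X : Type*} [MeasurableSpace X] (μ : Measure X)
    (p q : X → ℝ) (hpm : Measurable p) (hqm : Measurable q)
    (hp0 : ∀ x, 0 ≤ p x) (hq0 : ∀ x, 0 ≤ q x)
    (hp1 : ∫ x, p x ∂μ = 1) (hq1 : ∫ x, q x ∂μ = 1)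
    (hsupp : ∀ᵐ x ∂μ, 0 < p x ↔ 0 < q x)
    (L : X → ℝ) (hL : ∀ x, L x = if 0 < p x then q x / p x else 0)
    (g : ℝ → ℝ) (hgm : Measurable g) (hgmono : Monotone g)
    (C : ℝ) (hgbd : ∀ y, |g y| ≤ C)
    (δ₁ δ₂ : ℝ) (h01 : 0 ≤ δ₁) (h12 : δ₁ ≤ δ₂) (h21 : δ₂ ≤ 1) :
    ∫ x, g (L x) ∂(μ.withDensity fun x => ENNReal.ofReal (δ₁ * q x + (1 - δ₁) * p x))
      ≤ ∫ x, g (L x) ∂(μ.withDensity fun x => ENNReal.ofReal (δ₂ * q x + (1 - δ₂) * p x)) := by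
  have hp : Integrable p μ := .of_integral_ne_zero (by rw [hp1]; exact one_ne_zero)
  have hq : Integrable q μ := .of_integral_ne_zero (by rw [hq1]; exact one_ne_zero)
  have hLm : Measurable L := by
    rw [funext hL]
    exact Measurable.ite (measurableSet_lt measurable_const hpm) (hqm.div hpm) measurable_const
  have hgL : AEStronglyMeasurable (fun x => g (L x)) μ := (hgm.comp hLm).aestronglyMeasurable
  have hpg := hp.mul_bdd hgL (ae_of_all _ fun _ => hgbd _)
  have hqg := hq.mul_bdd hgL (ae_of_all _ fun _ => hgbd _)
  have hle : ∀ᵐ x ∂μ, (q x - p x) * g 1 ≤ (q x - p x) * g (L x) := by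
    filter_upwards [hsupp] with x hx
    by_cases hpx : 0 < p x
    · rw [hL x, if_pos hpx]
      exact hgmono.sub_mul_le_sub_mul_div hpx
    · have hqx : q x = 0 := le_antisymm (not_lt.mp (hpx ∘ hx.mpr)) (hq0 x)
      simp [le_antisymm (not_lt.mp hpx) (hp0 x), hqx]
  have hslope := integral_mul_le_integral_mul_of_sub_mul_le (g 1) hp hq (hp1.trans hq1.symm)
    hpg hqg hle
  rw [integral_withDensity_mixture hpm hqm hp0 hq0 hpg hqg h01 (h12.trans h21),
    integral_withDensity_mixture hpm hqm hp0 hq0 hpg hqg (h01.trans h12) h21]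
  linarith [mul_nonneg (sub_nonneg.2 h12) (sub_nonneg.2 hslope)]

/-- Stochastic monotonicity of the likelihood ratio under a mixture: if `Z_δ` has density
`δq + (1−δ)p` and `L = q/p`, then for every bounded nondecreasing measurable `g` and
`δ₁ ≤ δ₂`, one has `E[g(L(Z_{δ₁}))] ≤ E[g(L(Z_{δ₂}))]`. -/
theorem stmt_9 {X : Type*} [MeasurableSpace X] (μ : Measure X) [SigmaFinite μ]
    (p q : X → ℝ) (hpm : Measurable p) (hqm : Measurable q)
    (hp0 : ∀ x, 0 ≤ p x) (hq0 : ∀ x, 0 ≤ q x)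
    (hp1 : ∫ x, p x ∂μ = 1) (hq1 : ∫ x, q x ∂μ = 1)
    (hsupp : ∀ᵐ x ∂μ, 0 < p x ↔ 0 < q x)
    (L : X → ℝ) (hL : ∀ x, L x = if 0 < p x then q x / p x else 0)
    (g : ℝ → ℝ) (hgm : Measurable g) (hgmono : Monotone g)
    (C : ℝ) (hgbd : ∀ y, |g y| ≤ C)
    (δ₁ δ₂ : ℝ) (h01 : 0 ≤ δ₁) (h12 : δ₁ ≤ δ₂) (h21 : δ₂ ≤ 1) :
    ∫ x, g (L x) ∂(μ.withDensity fun x => ENNReal.ofReal (δ₁ * q x + (1 - δ₁) * p x))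
      ≤ ∫ x, g (L x) ∂(μ.withDensity fun x => ENNReal.ofReal (δ₂ * q x + (1 - δ₂) * p x)) :=
  stmt_9_general μ p q hpm hqm hp0 hq0 hp1 hq1 hsupp L hL g hgm hgmono C hgbd δ₁ δ₂ h01 h12 h21
end

section
/- Let μ be a σ-finite measure, p and q probability densities with respect to μ with the same support (μ-a.e., p(x) > 0 iff q(x) > 0), L(x) = q(x)/p(x) on {p > 0} (and L(x) = 0 elsewhere), and θ ∈ (0,1). For x ∈ (0,1) define δ(x) = θ + (1−θ)x, c(x) = (1−θ)(1−x)/(θ + (1−θ)x), and h_x(z) = L(z)/(L(z) + c(x)). Then for all 0 < x ≤ x' < 1 and every a ∈ ℝ, ∫ 1{h_x(z) > a} (δ(x)q(z) + (1−δ(x))p(z)) dμ(z) ≤ ∫ 1{h_{x'}(z) > a} (δ(x')q(z) + (1−δ(x'))p(z)) dμ(z). That is, the law of h_{x'}(Z') for Z' with density δ(x')q + (1−δ(x'))p stochastically dominates the law of h_x(Z) for Z with density δ(x)q + (1−δ(x))p, so the Markov transition kernel K(x,·) given by the law of h_x(Z) is stochastically monotone in x. -/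
/-!
Shrinking `c` from `c(x)` to `c(x')` enlarges the event `{a < L/(L + c)}`, and moving the
mixture weight from `δ(x)` to `δ(x')` shifts mass from `p` to `q`. Both changes can only increase
the probability, the second because the event is an upper set of the likelihood ratio `L = q/p`,
and such a set never has less `q`-mass than `p`-mass.
-/

open MeasureTheory

lemma div_add_le_div_add {l l' c c' : ℝ} (hl : 0 ≤ l) (hll' : l ≤ l') (hc' : 0 < c')
    (hcc' : c' ≤ c) : l / (l + c) ≤ l' / (l' + c') := by
  rw [div_le_div_iff₀ (by linarith) (by linarith)]
  nlinarith

section LikelihoodRatio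

variable {X : Type*} [MeasurableSpace X] {μ : Measure X} {p q L : X → ℝ}

lemma setIntegral_le_of_upperSet_likelihoodRatio (hp0 : ∀ z, 0 ≤ p z)
    (hpint : Integrable p μ) (hqint : Integrable q μ) (hmass : ∫ z, p z ∂μ = ∫ z, q z ∂μ)
    (hac : ∀ᵐ z ∂μ, 0 < q z → 0 < p z) (hL : ∀ z, L z = if 0 < p z then q z / p z else 0)
    {S : Set X} (hS : MeasurableSet S) (hup : ∀ z w, z ∈ S → L z ≤ L w → w ∈ S) :
    ∫ z in S, p z ∂μ ≤ ∫ z in S, q z ∂μ := by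
  have hq_eq : ∀ z, 0 < p z → q z = L z * p z := fun z hz => by
    rw [hL z, if_pos hz]
    field_simp
  by_cases hlow : ∃ z ∈ S, L z < 1
  · -- Then `Sᶜ ⊆ {L < 1}`, where `q ≤ p`; compare the complements, which carry equal total mass.
    obtain ⟨z, hzS, hz1⟩ := hlow
    have hcompl : ∫ w in Sᶜ, q w ∂μ ≤ ∫ w in Sᶜ, p w ∂μ := by
      refine setIntegral_mono_on_ae hqint.integrableOn hpint.integrableOn hS.compl ?_
      filter_upwards [hac] with w hw hwS
      have hw1 : L w < 1 := by
        by_contra! h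
        exact hwS (hup z w hzS (by linarith))
      by_cases hpw : 0 < p w
      · rw [hq_eq w hpw]
        nlinarith
      · exact (not_lt.1 (mt hw hpw)).trans (hp0 w)
    have hp_split := integral_add_compl hS hpint
    have hq_split := integral_add_compl hS hqint
    linarith
  · push Not at hlow
    refine setIntegral_mono_on hpint.integrableOn hqint.integrableOn hS fun z hz => ?_
    have hpz : 0 < p z := by
      by_contra hpz
      have h1 := hlow z hz
      rw [hL z, if_neg hpz] at h1
      linarith
    rw [hq_eq z hpz]
    nlinarith [hlow z hz]

lemma withDensity_mixture_apply (hp0 : ∀ z, 0 ≤ p z) (hq0 : ∀ z, 0 ≤ q z)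
    (hpint : Integrable p μ) (hqint : Integrable q μ) {S : Set X} (hS : MeasurableSet S)
    {d : ℝ} (hd0 : 0 ≤ d) (hd1 : d ≤ 1) :
    μ.withDensity (fun z => ENNReal.ofReal (d * q z + (1 - d) * p z)) S =
      ENNReal.ofReal (d * ∫ z in S, q z ∂μ + (1 - d) * ∫ z in S, p z ∂μ) := by
  have hint : Integrable (fun z => d * q z + (1 - d) * p z) μ :=
    (hqint.const_mul d).add (hpint.const_mul (1 - d))
  have hnn : 0 ≤ᵐ[μ.restrict S] fun z => d * q z + (1 - d) * p z :=
    Filter.Eventually.of_forall fun z =>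
      add_nonneg (mul_nonneg hd0 (hq0 z)) (mul_nonneg (by linarith) (hp0 z))
  rw [withDensity_apply _ hS, ← ofReal_integral_eq_lintegral_ofReal hint.integrableOn hnn,
    integral_add (hqint.const_mul d).integrableOn (hpint.const_mul (1 - d)).integrableOn,
    integral_const_mul, integral_const_mul]

lemma withDensity_mixture_apply_mono (hp0 : ∀ z, 0 ≤ p z) (hq0 : ∀ z, 0 ≤ q z)
    (hpint : Integrable p μ) (hqint : Integrable q μ) {S : Set X} (hS : MeasurableSet S)
    (hpq : ∫ z in S, p z ∂μ ≤ ∫ z in S, q z ∂μ) {d d' : ℝ} (hd : 0 ≤ d) (hdd' : d ≤ d')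
    (hd' : d' ≤ 1) :
    μ.withDensity (fun z => ENNReal.ofReal (d * q z + (1 - d) * p z)) S ≤
      μ.withDensity (fun z => ENNReal.ofReal (d' * q z + (1 - d') * p z)) S := by
  rw [withDensity_mixture_apply hp0 hq0 hpint hqint hS hd (hdd'.trans hd'),
    withDensity_mixture_apply hp0 hq0 hpint hqint hS (hd.trans hdd') hd']
  exact ENNReal.ofReal_le_ofReal (by nlinarith)

end LikelihoodRatio

theorem stmt_11_general {X : Type*} [MeasurableSpace X] (μ : Measure X)
    (p q : X → ℝ) (hpm : Measurable p) (hqm : Measurable q)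
    (hp0 : ∀ x, 0 ≤ p x) (hq0 : ∀ x, 0 ≤ q x)
    (hp1 : ∫ x, p x ∂μ = 1) (hq1 : ∫ x, q x ∂μ = 1)
    (hsupp : ∀ᵐ x ∂μ, 0 < p x ↔ 0 < q x)
    (L : X → ℝ) (hL : ∀ x, L x = if 0 < p x then q x / p x else 0)
    (θ : ℝ) (hθ : θ ∈ Set.Ioo (0 : ℝ) 1)
    (x x' : ℝ) (hx : 0 < x) (hxx' : x ≤ x') (hx' : x' < 1) (a : ℝ) :
    (μ.withDensity fun z =>
        ENNReal.ofReal ((θ + (1 - θ) * x) * q z + (1 - (θ + (1 - θ) * x)) * p z))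
      {z | a < L z / (L z + (1 - θ) * (1 - x) / (θ + (1 - θ) * x))}
    ≤ (μ.withDensity fun z =>
        ENNReal.ofReal ((θ + (1 - θ) * x') * q z + (1 - (θ + (1 - θ) * x')) * p z))
      {z | a < L z / (L z + (1 - θ) * (1 - x') / (θ + (1 - θ) * x'))} := by
  obtain ⟨hθ0, hθ1⟩ := hθ
  set δ := θ + (1 - θ) * x
  set δ' := θ + (1 - θ) * x'
  set c := (1 - θ) * (1 - x) / δ
  set c' := (1 - θ) * (1 - x') / δ'
  have hδ : 0 < δ := by nlinarith
  have hδδ' : δ ≤ δ' := by nlinarith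
  have hδ' : δ' ≤ 1 := by nlinarith
  have hc' : 0 < c' := div_pos (by nlinarith) (by linarith)
  have hcc' : c' ≤ c := by
    rw [div_le_div_iff₀ (by linarith) hδ]
    nlinarith
  have hpint : Integrable p μ := Integrable.of_integral_ne_zero (by rw [hp1]; exact one_ne_zero)
  have hqint : Integrable q μ := Integrable.of_integral_ne_zero (by rw [hq1]; exact one_ne_zero)
  have hL0 : ∀ z, 0 ≤ L z := fun z => by
    rw [hL z]
    split_ifs
    exacts [div_nonneg (hq0 z) (hp0 z), le_rfl]
  have hLm : Measurable L := by
    rw [funext hL]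
    exact Measurable.ite (measurableSet_lt measurable_const hpm) (hqm.div hpm) measurable_const
  have hS : MeasurableSet {z | a < L z / (L z + c')} :=
    measurableSet_lt measurable_const (hLm.div (hLm.add_const c'))
  have hpq := setIntegral_le_of_upperSet_likelihoodRatio hp0 hpint hqint (hp1.trans hq1.symm)
    (hsupp.mono fun z h => h.2) hL hS
    fun z w hz hzw => hz.trans_le (div_add_le_div_add (hL0 z) hzw hc' le_rfl)
  exact (measure_mono fun z hz => hz.trans_le (div_add_le_div_add (hL0 z) le_rfl hc' hcc')).trans
    (withDensity_mixture_apply_mono hp0 hq0 hpint hqint hS hpq hδ.le hδδ' hδ')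

/-- Stochastic monotonicity of the Shiryaev posterior update kernel: for `0 < x ≤ x' < 1`,
with `δ(x) = θ + (1−θ)x`, `c(x) = (1−θ)(1−x)/(θ+(1−θ)x)` and `h_x(z) = L(z)/(L(z)+c(x))`,
the law of `h_{x'}(Z')` for `Z'` with density `δ(x')q + (1−δ(x'))p` stochastically dominates
the law of `h_x(Z)` for `Z` with density `δ(x)q + (1−δ(x))p`:
`P(h_x(Z) > a) ≤ P(h_{x'}(Z') > a)` for every real `a`. -/
theorem stmt_11 {X : Type*} [MeasurableSpace X] (μ : Measure X) [SigmaFinite μ]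
    (p q : X → ℝ) (hpm : Measurable p) (hqm : Measurable q)
    (hp0 : ∀ x, 0 ≤ p x) (hq0 : ∀ x, 0 ≤ q x)
    (hp1 : ∫ x, p x ∂μ = 1) (hq1 : ∫ x, q x ∂μ = 1)
    (hsupp : ∀ᵐ x ∂μ, 0 < p x ↔ 0 < q x)
    (L : X → ℝ) (hL : ∀ x, L x = if 0 < p x then q x / p x else 0)
    (θ : ℝ) (hθ : θ ∈ Set.Ioo (0 : ℝ) 1)
    (x x' : ℝ) (hx : 0 < x) (hxx' : x ≤ x') (hx' : x' < 1) (a : ℝ) :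
    (μ.withDensity fun z =>
        ENNReal.ofReal ((θ + (1 - θ) * x) * q z + (1 - (θ + (1 - θ) * x)) * p z))
      {z | a < L z / (L z + (1 - θ) * (1 - x) / (θ + (1 - θ) * x))}
    ≤ (μ.withDensity fun z =>
        ENNReal.ofReal ((θ + (1 - θ) * x') * q z + (1 - (θ + (1 - θ) * x')) * p z))
      {z | a < L z / (L z + (1 - θ) * (1 - x') / (θ + (1 - θ) * x'))} :=
  stmt_11_general μ p q hpm hqm hp0 hq0 hp1 hq1 hsupp L hL θ hθ x x' hx hxx' hx' a
end

section
/- Let (Ω, F, P) be a probability space, A ∈ F an event, V an integrable real-valued random variable, and λ ≤ λ' real numbers. Then E[V · 1{V ≤ λ} · 1_A] · P({V ≤ λ'} ∩ A) ≤ E[V · 1{V ≤ λ'} · 1_A] · P({V ≤ λ} ∩ A). In particular, if both P({V ≤ λ} ∩ A) > 0 and P({V ≤ λ'} ∩ A) > 0, the conditional mean E[V | V ≤ λ, A] is nondecreasing in the threshold λ: E[V | V ≤ λ, A] ≤ E[V | V ≤ λ', A]. -/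
open MeasureTheory

/-
Split `{V ≤ λ'} ∩ A` into `S = {V ≤ λ} ∩ A` and the rest `R`. On `S` we have `V ≤ λ` and on `R`
we have `V > λ`, so `E[V; S] P(R) ≤ λ P(S) P(R) ≤ E[V; R] P(S)`; adding `E[V; S] P(S)` to both
sides gives the claim.
-/

namespace MeasureTheory

variable {Ω : Type*} [MeasurableSpace Ω] {μ : Measure Ω} {f : Ω → ℝ} {s t : Set Ω} {c : ℝ}

theorem setIntegral_le_const_mul_measureReal (hs : MeasurableSet s) (hμs : μ s ≠ ⊤)
    (hfs : IntegrableOn f s μ) (hf : ∀ x ∈ s, f x ≤ c) :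
    ∫ x in s, f x ∂μ ≤ c * μ.real s := by
  calc ∫ x in s, f x ∂μ ≤ ∫ _ in s, c ∂μ := setIntegral_mono_on hfs (integrableOn_const hμs) hs hf
    _ = c * μ.real s := by rw [setIntegral_const, smul_eq_mul, mul_comm]

theorem setIntegral_mul_measureReal_le_of_subset (hs : MeasurableSet s) (ht : MeasurableSet t)
    (hμt : μ t ≠ ⊤) (hft : IntegrableOn f t μ) (hst : s ⊆ t)
    (hf_le : ∀ x ∈ s, f x ≤ c) (hf_ge : ∀ x ∈ t \ s, c ≤ f x) :
    (∫ x in s, f x ∂μ) * μ.real t ≤ (∫ x in t, f x ∂μ) * μ.real s := by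
  have hμs : μ s ≠ ⊤ := measure_ne_top_of_subset hst hμt
  have h_int_split := integral_inter_add_sdiff (f := f) hs hft
  have h_meas_split := measureReal_inter_add_sdiff (μ := μ) hs hμt
  rw [Set.inter_eq_self_of_subset_right hst] at h_int_split h_meas_split
  have h_lower := setIntegral_le_const_mul_measureReal hs hμs (hft.mono_set hst) hf_le
  have h_upper := setIntegral_ge_of_const_le_real (ht.diff hs)
    (measure_ne_top_of_subset Set.sdiff_subset hμt) hf_ge (hft.mono_set Set.sdiff_subset)
  have h_nonneg_s : 0 ≤ μ.real s := measureReal_nonneg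
  have h_nonneg_diff : 0 ≤ μ.real (t \ s) := measureReal_nonneg
  rw [← h_int_split, ← h_meas_split]
  linarith [mul_le_mul_of_nonneg_right h_lower h_nonneg_diff,
    mul_le_mul_of_nonneg_left h_upper h_nonneg_s]

end MeasureTheory

/-- For an event `A`, an integrable random variable `V` and thresholds `λ ≤ λ'`:
`E[V 1{V≤λ} 1_A] · P({V≤λ'} ∩ A) ≤ E[V 1{V≤λ'} 1_A] · P({V≤λ} ∩ A)`.  In particular, when
both `P({V≤λ} ∩ A)` and `P({V≤λ'} ∩ A)` are positive, the conditional mean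
`E[V | V ≤ λ, A]` is nondecreasing in the threshold `λ`. -/
theorem stmt_13 {Ω : Type*} [MeasurableSpace Ω] (P : Measure Ω) [IsProbabilityMeasure P]
    (A : Set Ω) (hA : MeasurableSet A)
    (V : Ω → ℝ) (hVm : Measurable V) (hVint : Integrable V P)
    (l l' : ℝ) (hll' : l ≤ l') :
    (∫ ω in {ω | V ω ≤ l} ∩ A, V ω ∂P) * (P ({ω | V ω ≤ l'} ∩ A)).toReal
        ≤ (∫ ω in {ω | V ω ≤ l'} ∩ A, V ω ∂P) * (P ({ω | V ω ≤ l} ∩ A)).toReal ∧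
    (0 < P ({ω | V ω ≤ l} ∩ A) → 0 < P ({ω | V ω ≤ l'} ∩ A) →
      (∫ ω in {ω | V ω ≤ l} ∩ A, V ω ∂P) / (P ({ω | V ω ≤ l} ∩ A)).toReal
        ≤ (∫ ω in {ω | V ω ≤ l'} ∩ A, V ω ∂P) / (P ({ω | V ω ≤ l'} ∩ A)).toReal) := by
  have hmain : (∫ ω in {ω | V ω ≤ l} ∩ A, V ω ∂P) * P.real ({ω | V ω ≤ l'} ∩ A)
      ≤ (∫ ω in {ω | V ω ≤ l'} ∩ A, V ω ∂P) * P.real ({ω | V ω ≤ l} ∩ A) :=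
    setIntegral_mul_measureReal_le_of_subset ((measurableSet_le hVm measurable_const).inter hA)
      ((measurableSet_le hVm measurable_const).inter hA) (measure_ne_top P _) hVint.integrableOn
      (fun _ hω => ⟨hω.1.trans hll', hω.2⟩) (fun _ hω => hω.1)
      (fun _ hω => le_of_not_ge fun h => hω.2 ⟨h, hω.1.2⟩)
  refine ⟨hmain, fun hpos hpos' => ?_⟩
  rw [div_le_div_iff₀ (ENNReal.toReal_pos hpos.ne' (measure_ne_top P _))
    (ENNReal.toReal_pos hpos'.ne' (measure_ne_top P _))]
  exact hmain
end
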